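/- Let d be a smooth function on an open set of ℝ² satisfying |∇d| = 1, and let κ = Δd. Then at every point of the zero level set {d = 0}, one has Δ²d = Δ_Γ κ + κ³, where Δ_Γ κ is defined as the Laplacian of κ composed with the projection p(x) = x − d(x)∇d(x), evaluated on {d = 0}. -/

import Mathlib

open scoped BigOperators

/-- Partial derivative in direction `i`. -/
noncomputable def pd {n : ℕ} (i : Fin n) (f : (Fin n → ℝ) → ℝ) : (Fin n → ℝ) → ℝ :=
  fun x => fderiv ℝ f x (Pi.single i 1)

/-- Laplacian. -/
noncomputable def lap {n : ℕ} (f : (Fin n → ℝ) → ℝ) : (Fin n → ℝ) → ℝ :=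
  fun x => ∑ i, pd i (pd i f) x

section helpers
variable {n : ℕ} {f g : (Fin n → ℝ) → ℝ} {x : Fin n → ℝ} {i j : Fin n} {U : Set (Fin n → ℝ)}

lemma pd_congr (h : f =ᶠ[nhds x] g) : pd i f x = pd i g x := by
  unfold pd; rw [h.fderiv_eq]

lemma pd_congr_of_open (hU : IsOpen U) (hx : x ∈ U) (h : ∀ y ∈ U, f y = g y) :
    pd i f x = pd i g x :=
  pd_congr (Filter.eventuallyEq_of_mem (hU.mem_nhds hx) h)

lemma pd_contDiffOn (hU : IsOpen U) (hf : ContDiffOn ℝ (⊤ : ℕ∞) f U) :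
    ContDiffOn ℝ (⊤ : ℕ∞) (pd i f) U := by
  have h1 : ContDiffOn ℝ (⊤ : ℕ∞) (fderiv ℝ f) U := hf.fderiv_of_isOpen hU (by simp)
  exact h1.clm_apply contDiffOn_const

lemma pd_diffAt (hU : IsOpen U) (hx : x ∈ U) (hf : ContDiffOn ℝ (⊤ : ℕ∞) f U) :
    DifferentiableAt ℝ (pd i f) x := by
  have := (pd_contDiffOn (i := i) hU hf).contDiffAt (hU.mem_nhds hx)
  exact this.differentiableAt (by simp)

lemma diffAt_of_contDiffOn (hU : IsOpen U) (hx : x ∈ U) (hf : ContDiffOn ℝ (⊤ : ℕ∞) f U) :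
    DifferentiableAt ℝ f x :=
  ((hf.contDiffAt (hU.mem_nhds hx))).differentiableAt (by simp)

lemma pd_add (hf : DifferentiableAt ℝ f x) (hg : DifferentiableAt ℝ g x) :
    pd i (fun y => f y + g y) x = pd i f x + pd i g x := by
  unfold pd; rw [fderiv_fun_add hf hg]; rfl

lemma pd_mul (hf : DifferentiableAt ℝ f x) (hg : DifferentiableAt ℝ g x) :
    pd i (fun y => f y * g y) x = pd i f x * g x + f x * pd i g x := by
  unfold pd; rw [fderiv_fun_mul hf hg]; simp; ring

lemma pd_const (c : ℝ) : pd i (fun _ => c) x = 0 := by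
  unfold pd; simp

lemma pd_sub (hf : DifferentiableAt ℝ f x) (hg : DifferentiableAt ℝ g x) :
    pd i (fun y => f y - g y) x = pd i f x - pd i g x := by
  unfold pd; rw [fderiv_fun_sub hf hg]; rfl

lemma pd_coord (k : Fin n) : pd i (fun y => y k) x = if i = k then 1 else 0 := by
  have : (fun y : Fin n → ℝ => y k) = (ContinuousLinearMap.proj k : (Fin n → ℝ) →L[ℝ] ℝ) := rfl
  unfold pd
  rw [this, ContinuousLinearMap.fderiv]
  simp [ContinuousLinearMap.proj, Pi.single_apply, eq_comm]

lemma pd_sum {s : Finset (Fin n)} {F : Fin n → (Fin n → ℝ) → ℝ}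
    (hF : ∀ k ∈ s, DifferentiableAt ℝ (F k) x) :
    pd i (fun y => ∑ k ∈ s, F k y) x = ∑ k ∈ s, pd i (F k) x := by
  unfold pd
  rw [fderiv_fun_sum hF]
  simp

end helpers

section more
variable {n : ℕ} {f g : (Fin n → ℝ) → ℝ} {x : Fin n → ℝ} {i j : Fin n} {U : Set (Fin n → ℝ)}

lemma pd_pd_eq_snd (hU : IsOpen U) (hx : x ∈ U) (hf : ContDiffOn ℝ (⊤ : ℕ∞) f U) :
    pd i (pd j f) x = fderiv ℝ (fderiv ℝ f) x (Pi.single i 1) (Pi.single j 1) := by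
  have hdf : DifferentiableAt ℝ (fderiv ℝ f) x := by
    have : ContDiffOn ℝ (⊤ : ℕ∞) (fderiv ℝ f) U := hf.fderiv_of_isOpen hU (by simp)
    exact (this.contDiffAt (hU.mem_nhds hx)).differentiableAt (by simp)
  unfold pd
  rw [fderiv_clm_apply hdf (differentiableAt_const _)]
  simp

lemma pd_comm (hU : IsOpen U) (hx : x ∈ U) (hf : ContDiffOn ℝ (⊤ : ℕ∞) f U) :
    pd i (pd j f) x = pd j (pd i f) x := by
  rw [pd_pd_eq_snd hU hx hf, pd_pd_eq_snd hU hx hf]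
  have hsymm : IsSymmSndFDerivAt ℝ f x := by
    have hfa : ContDiffAt ℝ (⊤ : ℕ∞) f x := hf.contDiffAt (hU.mem_nhds hx)
    exact hfa.isSymmSndFDerivAt (by rw [minSmoothness_of_isRCLikeNormedField]; exact WithTop.coe_le_coe.mpr le_top)
  exact hsymm _ _

lemma pd_comp {q : (Fin n → ℝ) → (Fin n → ℝ)}
    (hq : ∀ k, DifferentiableAt ℝ (fun y => q y k) x)
    (hg : DifferentiableAt ℝ g (q x)) :
    pd j (fun y => g (q y)) x = ∑ k, pd j (fun y => q y k) x * pd k g (q x) := by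
  have hq' : DifferentiableAt ℝ q x := by
    have : q = fun y k => q y k := rfl
    rw [this]; exact differentiableAt_pi.mpr hq
  unfold pd
  have hcomp : fderiv ℝ (fun y => g (q y)) x = (fderiv ℝ g (q x)).comp (fderiv ℝ q x) :=
    fderiv_comp x hg hq'
  rw [hcomp]
  have hpi : fderiv ℝ q x = ContinuousLinearMap.pi fun k => fderiv ℝ (fun y => q y k) x :=
    fderiv_pi hq
  set L := fderiv ℝ g (q x)
  set w : Fin n → ℝ := fderiv ℝ q x (Pi.single j 1) with hw
  have hwk : ∀ k, w k = fderiv ℝ (fun y => q y k) x (Pi.single j 1) := by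
    intro k; rw [hw, hpi]; rfl
  have hdec : w = ∑ k, w k • (Pi.single k 1 : Fin n → ℝ) := by
    ext m; simp [Finset.sum_apply, Pi.single_apply]
  calc L w = L (∑ k, w k • (Pi.single k 1 : Fin n → ℝ)) := by rw [← hdec]
    _ = ∑ k, w k * L (Pi.single k 1) := by rw [map_sum]; simp [mul_comm]
    _ = ∑ k, fderiv ℝ (fun y => q y k) x (Pi.single j 1) * L (Pi.single k 1) := by
        simp_rw [hwk]

end more

section steps
variable {U : Set (Fin 2 → ℝ)} {d : (Fin 2 → ℝ) → ℝ}

lemma step_A (hU : IsOpen U) (hd : ContDiffOn ℝ (⊤ : ℕ∞) d U)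
    (heik : ∀ x ∈ U, ∑ i, (pd i d x) ^ 2 = 1) (j : Fin 2) :
    ∀ y ∈ U, pd 0 d y * pd j (pd 0 d) y + pd 1 d y * pd j (pd 1 d) y = 0 := by
  intro y hy
  have hE : ∀ z ∈ U, (fun z => pd 0 d z * pd 0 d z + pd 1 d z * pd 1 d z) z
      = (fun _ => (1:ℝ)) z := by
    intro z hz
    have := heik z hz
    rw [Fin.sum_univ_two, pow_two, pow_two] at this
    simpa using this
  have h0 := pd_congr_of_open (i := j) hU hy hE
  rw [pd_const] at h0
  have hd0 : DifferentiableAt ℝ (pd (0:Fin 2) d) y := pd_diffAt hU hy hd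
  have hd1 : DifferentiableAt ℝ (pd (1:Fin 2) d) y := pd_diffAt hU hy hd
  rw [pd_add (hd0.fun_mul hd0) (hd1.fun_mul hd1), pd_mul hd0 hd0, pd_mul hd1 hd1] at h0
  linarith

lemma step_B (hU : IsOpen U) (hd : ContDiffOn ℝ (⊤ : ℕ∞) d U)
    (heik : ∀ x ∈ U, ∑ i, (pd i d x) ^ 2 = 1) (k j : Fin 2) :
    ∀ y ∈ U,
      pd k (pd 0 d) y * pd j (pd 0 d) y + pd k (pd 1 d) y * pd j (pd 1 d) y
      + pd 0 d y * pd k (pd j (pd 0 d)) y + pd 1 d y * pd k (pd j (pd 1 d)) y = 0 := by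
  intro y hy
  have hF : ∀ z ∈ U, (fun z => pd 0 d z * pd j (pd 0 d) z + pd 1 d z * pd j (pd 1 d) z) z
      = (fun _ => (0:ℝ)) z := fun z hz => step_A hU hd heik j z hz
  have h0 := pd_congr_of_open (i := k) hU hy hF
  rw [pd_const] at h0
  have hd0 : DifferentiableAt ℝ (pd (0:Fin 2) d) y := pd_diffAt hU hy hd
  have hd1 : DifferentiableAt ℝ (pd (1:Fin 2) d) y := pd_diffAt hU hy hd
  have hh0 : DifferentiableAt ℝ (pd j (pd (0:Fin 2) d)) y :=
    pd_diffAt hU hy (pd_contDiffOn hU hd)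
  have hh1 : DifferentiableAt ℝ (pd j (pd (1:Fin 2) d)) y :=
    pd_diffAt hU hy (pd_contDiffOn hU hd)
  rw [pd_add (hd0.fun_mul hh0) (hd1.fun_mul hh1), pd_mul hd0 hh0, pd_mul hd1 hh1] at h0
  linarith

lemma sym2 (hU : IsOpen U) (hd : ContDiffOn ℝ (⊤ : ℕ∞) d U) {y : Fin 2 → ℝ} (hy : y ∈ U)
    (i j : Fin 2) : pd i (pd j d) y = pd j (pd i d) y := pd_comm hU hy hd

lemma sym3a (hU : IsOpen U) (hd : ContDiffOn ℝ (⊤ : ℕ∞) d U) {y : Fin 2 → ℝ} (hy : y ∈ U)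
    (k i j : Fin 2) : pd k (pd i (pd j d)) y = pd i (pd k (pd j d)) y :=
  pd_comm hU hy (pd_contDiffOn hU hd)

lemma sym3b (hU : IsOpen U) (hd : ContDiffOn ℝ (⊤ : ℕ∞) d U) {y : Fin 2 → ℝ} (hy : y ∈ U)
    (k i j : Fin 2) : pd k (pd i (pd j d)) y = pd k (pd j (pd i d)) y :=
  pd_congr_of_open hU hy (fun z hz => sym2 hU hd hz i j)

end steps

noncomputable def kf (d : (Fin 2 → ℝ) → ℝ) : (Fin 2 → ℝ) → ℝ :=
  fun y => pd 0 (pd 0 d) y + pd 1 (pd 1 d) y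

section steps2
variable {U : Set (Fin 2 → ℝ)} {d : (Fin 2 → ℝ) → ℝ}

lemma kf_contDiffOn (hU : IsOpen U) (hd : ContDiffOn ℝ (⊤ : ℕ∞) d U) :
    ContDiffOn ℝ (⊤ : ℕ∞) (kf d) U :=
  (pd_contDiffOn hU (pd_contDiffOn hU hd)).add (pd_contDiffOn hU (pd_contDiffOn hU hd))

lemma pd_kf (hU : IsOpen U) (hd : ContDiffOn ℝ (⊤ : ℕ∞) d U) {y : Fin 2 → ℝ} (hy : y ∈ U)
    (l : Fin 2) :
    pd l (kf d) y = pd l (pd 0 (pd 0 d)) y + pd l (pd 1 (pd 1 d)) y := by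
  show pd l (fun y => pd 0 (pd 0 d) y + pd 1 (pd 1 d) y) y = _
  exact pd_add (pd_diffAt hU hy (pd_contDiffOn hU hd)) (pd_diffAt hU hy (pd_contDiffOn hU hd))

lemma step_C (hU : IsOpen U) (hd : ContDiffOn ℝ (⊤ : ℕ∞) d U)
    (heik : ∀ x ∈ U, ∑ i, (pd i d x) ^ 2 = 1) :
    ∀ y ∈ U,
      pd 0 d y * pd 0 (kf d) y + pd 1 d y * pd 1 (kf d) y
      + (pd 0 (pd 0 d) y * pd 0 (pd 0 d) y + pd 0 (pd 1 d) y * pd 0 (pd 1 d) y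
        + pd 1 (pd 0 d) y * pd 1 (pd 0 d) y + pd 1 (pd 1 d) y * pd 1 (pd 1 d) y) = 0 := by
  intro y hy
  have e0 := step_B hU hd heik 0 0 y hy
  have e1 := step_B hU hd heik 1 1 y hy
  rw [pd_kf hU hd hy 0, pd_kf hU hd hy 1]
  have r1 : pd 0 (pd 1 (pd 1 d)) y = pd 1 (pd 1 (pd 0 d)) y :=
    (sym3a hU hd hy 0 1 1).trans (sym3b hU hd hy 1 0 1)
  have r2 : pd 1 (pd 0 (pd 0 d)) y = pd 0 (pd 0 (pd 1 d)) y :=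
    (sym3a hU hd hy 1 0 0).trans (sym3b hU hd hy 0 1 0)
  rw [r1, r2]
  linarith

lemma step_Cp (hU : IsOpen U) (hd : ContDiffOn ℝ (⊤ : ℕ∞) d U)
    (heik : ∀ x ∈ U, ∑ i, (pd i d x) ^ 2 = 1) (k : Fin 2) :
    ∀ y ∈ U,
      pd k (pd 0 d) y * pd 0 (kf d) y + pd 0 d y * pd k (pd 0 (kf d)) y
      + pd k (pd 1 d) y * pd 1 (kf d) y + pd 1 d y * pd k (pd 1 (kf d)) y
      + 2 * (pd 0 (pd 0 d) y * pd k (pd 0 (pd 0 d)) y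
        + pd 0 (pd 1 d) y * pd k (pd 0 (pd 1 d)) y
        + pd 1 (pd 0 d) y * pd k (pd 1 (pd 0 d)) y
        + pd 1 (pd 1 d) y * pd k (pd 1 (pd 1 d)) y) = 0 := by
  intro y hy
  have hG : ∀ z ∈ U, (fun z =>
      pd 0 d z * pd 0 (kf d) z + pd 1 d z * pd 1 (kf d) z
      + (pd 0 (pd 0 d) z * pd 0 (pd 0 d) z + pd 0 (pd 1 d) z * pd 0 (pd 1 d) z
        + pd 1 (pd 0 d) z * pd 1 (pd 0 d) z + pd 1 (pd 1 d) z * pd 1 (pd 1 d) z)) z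
      = (fun _ => (0:ℝ)) z := fun z hz => step_C hU hd heik z hz
  have h0 := pd_congr_of_open (i := k) hU hy hG
  rw [pd_const] at h0
  have hd0 : DifferentiableAt ℝ (pd (0:Fin 2) d) y := pd_diffAt hU hy hd
  have hd1 : DifferentiableAt ℝ (pd (1:Fin 2) d) y := pd_diffAt hU hy hd
  have hk0 : DifferentiableAt ℝ (pd (0:Fin 2) (kf d)) y := pd_diffAt hU hy (kf_contDiffOn hU hd)
  have hk1 : DifferentiableAt ℝ (pd (1:Fin 2) (kf d)) y := pd_diffAt hU hy (kf_contDiffOn hU hd)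
  have hh : ∀ i j : Fin 2, DifferentiableAt ℝ (pd i (pd j d)) y := fun i j =>
    pd_diffAt hU hy (pd_contDiffOn hU hd)
  rw [pd_add (((hd0.fun_mul hk0).fun_add (hd1.fun_mul hk1)))
        (((((hh 0 0).fun_mul (hh 0 0)).fun_add ((hh 0 1).fun_mul (hh 0 1))).fun_add
          ((hh 1 0).fun_mul (hh 1 0))).fun_add ((hh 1 1).fun_mul (hh 1 1))),
      pd_add (hd0.fun_mul hk0) (hd1.fun_mul hk1),
      pd_mul hd0 hk0, pd_mul hd1 hk1,
      pd_add ((((hh 0 0).fun_mul (hh 0 0)).fun_add ((hh 0 1).fun_mul (hh 0 1))).fun_add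
        ((hh 1 0).fun_mul (hh 1 0))) ((hh 1 1).fun_mul (hh 1 1)),
      pd_add (((hh 0 0).fun_mul (hh 0 0)).fun_add ((hh 0 1).fun_mul (hh 0 1))) ((hh 1 0).fun_mul (hh 1 0)),
      pd_add ((hh 0 0).fun_mul (hh 0 0)) ((hh 0 1).fun_mul (hh 0 1)),
      pd_mul (hh 0 0) (hh 0 0), pd_mul (hh 0 1) (hh 0 1),
      pd_mul (hh 1 0) (hh 1 0), pd_mul (hh 1 1) (hh 1 1)] at h0
  linarith

end steps2

/-- Projection onto the zero level set: `p(x) = x − d(x) ∇d(x)`. -/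
noncomputable def proj {n : ℕ} (d : (Fin n → ℝ) → ℝ) (x : Fin n → ℝ) : Fin n → ℝ :=
  fun i => x i - d x * pd i d x

section steps3
variable {U : Set (Fin 2 → ℝ)} {d : (Fin 2 → ℝ) → ℝ}

lemma coord_diffAt {k : Fin 2} {y : Fin 2 → ℝ} :
    DifferentiableAt ℝ (fun y : Fin 2 → ℝ => y k) y :=
  (ContinuousLinearMap.proj (R := ℝ) (φ := fun _ : Fin 2 => ℝ) k).differentiableAt

lemma projk_diffAt (hU : IsOpen U) (hd : ContDiffOn ℝ (⊤ : ℕ∞) d U) {y : Fin 2 → ℝ} (hy : y ∈ U)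
    (k : Fin 2) : DifferentiableAt ℝ (fun y => proj d y k) y := by
  show DifferentiableAt ℝ (fun y => y k - d y * pd k d y) y
  exact coord_diffAt.sub ((diffAt_of_contDiffOn hU hy hd).mul (pd_diffAt hU hy hd))

lemma projk_contDiffOn (hU : IsOpen U) (hd : ContDiffOn ℝ (⊤ : ℕ∞) d U) (k : Fin 2) :
    ContDiffOn ℝ (⊤ : ℕ∞) (fun y => proj d y k) U := by
  show ContDiffOn ℝ (⊤ : ℕ∞) (fun y => y k - d y * pd k d y) U
  exact ((ContinuousLinearMap.proj (R := ℝ) (φ := fun _ : Fin 2 => ℝ) k).contDiff.contDiffOn).sub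
    (hd.mul (pd_contDiffOn hU hd))

lemma pd_projk (hU : IsOpen U) (hd : ContDiffOn ℝ (⊤ : ℕ∞) d U) {y : Fin 2 → ℝ} (hy : y ∈ U)
    (j k : Fin 2) :
    pd j (fun y => proj d y k) y
      = (if j = k then 1 else 0) - (pd j d y * pd k d y + d y * pd j (pd k d) y) := by
  have h1 : pd j (fun y => proj d y k) y = pd j (fun y => y k - d y * pd k d y) y := rfl
  rw [h1, pd_sub coord_diffAt ((diffAt_of_contDiffOn hU hy hd).fun_mul (pd_diffAt hU hy hd)),
    pd_coord, pd_mul (diffAt_of_contDiffOn hU hy hd) (pd_diffAt hU hy hd)]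

lemma pd_pd_projk (hU : IsOpen U) (hd : ContDiffOn ℝ (⊤ : ℕ∞) d U) {x : Fin 2 → ℝ} (hx : x ∈ U)
    (i j k : Fin 2) :
    pd i (pd j (fun y => proj d y k)) x
      = -(pd i (pd j d) x * pd k d x + pd j d x * pd i (pd k d) x
          + pd i d x * pd j (pd k d) x + d x * pd i (pd j (pd k d)) x) := by
  have h1 : pd i (pd j (fun y => proj d y k)) x
      = pd i (fun y => (if j = k then (1:ℝ) else 0)
          - (pd j d y * pd k d y + d y * pd j (pd k d) y)) x :=
    pd_congr_of_open hU hx (fun z hz => pd_projk hU hd hz j k)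
  have hjd : DifferentiableAt ℝ (pd j d) x := pd_diffAt hU hx hd
  have hkd : DifferentiableAt ℝ (pd k d) x := pd_diffAt hU hx hd
  have hdx : DifferentiableAt ℝ d x := diffAt_of_contDiffOn hU hx hd
  have hjk : DifferentiableAt ℝ (pd j (pd k d)) x := pd_diffAt hU hx (pd_contDiffOn hU hd)
  rw [h1, pd_sub (differentiableAt_const _) ((hjd.fun_mul hkd).fun_add (hdx.fun_mul hjk)), pd_const,
    pd_add (hjd.fun_mul hkd) (hdx.fun_mul hjk), pd_mul hjd hkd, pd_mul hdx hjk]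
  ring

lemma pd_comp_kf (hU : IsOpen U) (hd : ContDiffOn ℝ (⊤ : ℕ∞) d U) {y : Fin 2 → ℝ} (hy : y ∈ U)
    (hpy : proj d y ∈ U) (j : Fin 2) :
    pd j (fun z => kf d (proj d z)) y
      = ∑ k, pd j (fun z => proj d z k) y * pd k (kf d) (proj d y) :=
  pd_comp (fun k => projk_diffAt hU hd hy k)
    (diffAt_of_contDiffOn hU hpy (kf_contDiffOn hU hd))

end steps3

section steps4
variable {U : Set (Fin 2 → ℝ)} {d : (Fin 2 → ℝ) → ℝ}

lemma pd_pd_comp_kf (hU : IsOpen U) (hd : ContDiffOn ℝ (⊤ : ℕ∞) d U) {x : Fin 2 → ℝ}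
    (hx : x ∈ U) (hx0 : d x = 0) (i j : Fin 2) :
    pd i (pd j (fun z => kf d (proj d z))) x
      = ∑ k, (pd i (pd j (fun y => proj d y k)) x * pd k (kf d) x
          + pd j (fun y => proj d y k) x
            * ∑ l, pd i (fun y => proj d y l) x * pd l (pd k (kf d)) x) := by
  classical
  have hpx : proj d x = x := funext fun m => by simp [proj, hx0]
  have hcont : ContinuousOn (proj d) U :=
    continuousOn_pi.mpr fun k => (projk_contDiffOn hU hd k).continuousOn
  have hV : IsOpen (U ∩ proj d ⁻¹' U) := hcont.isOpen_inter_preimage hU hU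
  have hxV : x ∈ U ∩ proj d ⁻¹' U := ⟨hx, by simp only [Set.mem_preimage, hpx]; exact hx⟩
  have hstep : pd i (pd j (fun z => kf d (proj d z))) x
      = pd i (fun y => ∑ k, pd j (fun z => proj d z k) y * pd k (kf d) (proj d y)) x :=
    pd_congr_of_open hV hxV (fun z hz => pd_comp_kf hU hd hz.1 hz.2 j)
  have hg1 : ∀ k : Fin 2, DifferentiableAt ℝ (pd j (fun z => proj d z k)) x :=
    fun k => pd_diffAt hU hx (projk_contDiffOn hU hd k)
  have hin : DifferentiableAt ℝ (proj d) x := by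
    have : DifferentiableAt ℝ (fun y l => proj d y l) x :=
      differentiableAt_pi.mpr (fun l => projk_diffAt hU hd hx l)
    exact this
  have hout : ∀ k : Fin 2, DifferentiableAt ℝ (pd k (kf d)) (proj d x) := by
    intro k; rw [hpx]; exact pd_diffAt hU hx (kf_contDiffOn hU hd)
  have hg2 : ∀ k : Fin 2, DifferentiableAt ℝ (fun y => pd k (kf d) (proj d y)) x :=
    fun k => (hout k).comp x hin
  rw [hstep, pd_sum (fun k _ => (hg1 k).fun_mul (hg2 k))]
  refine Finset.sum_congr rfl fun k _ => ?_
  rw [pd_mul (hg1 k) (hg2 k)]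
  have hc := pd_comp (g := pd k (kf d)) (q := proj d) (x := x) (j := i)
    (fun l => projk_diffAt hU hd hx l) (hout k)
  rw [hc, hpx]

end steps4

theorem stmt_3 (U : Set (Fin 2 → ℝ)) (hU : IsOpen U)
    (d : (Fin 2 → ℝ) → ℝ) (hd : ContDiffOn ℝ (⊤ : ℕ∞) d U)
    (heik : ∀ x ∈ U, ∑ i, (pd i d x) ^ 2 = 1) :
    ∀ x ∈ U, d x = 0 →
      lap (lap d) x = lap (fun y => lap d (proj d y)) x + (lap d x) ^ 3 := by
  intro x hx hx0
  have hκ : lap d = kf d := funext fun y => by simp [lap, kf, Fin.sum_univ_two]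
  rw [hκ]
  -- scalar facts at x
  have heikx : (pd 0 d x) ^ 2 + (pd 1 d x) ^ 2 = 1 := by
    have := heik x hx; rwa [Fin.sum_univ_two] at this
  have A0 := step_A hU hd heik 0 x hx
  have A1 := step_A hU hd heik 1 x hx
  have B00 := step_B hU hd heik 0 0 x hx
  have B01 := step_B hU hd heik 0 1 x hx
  have B11 := step_B hU hd heik 1 1 x hx
  have Cp0 := step_Cp hU hd heik 0 x hx
  have Cp1 := step_Cp hU hd heik 1 x hx
  have kk0 := pd_kf hU hd hx 0
  have kk1 := pd_kf hU hd hx 1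
  -- value lemmas for first and second derivatives of proj components at x
  have hP : ∀ j k : Fin 2, pd j (fun y => proj d y k) x
      = (if j = k then 1 else 0) - pd j d x * pd k d x := by
    intro j k; rw [pd_projk hU hd hx j k, hx0]; ring
  have hPP : ∀ i j k : Fin 2, pd i (pd j (fun y => proj d y k)) x
      = -(pd i (pd j d) x * pd k d x + pd j d x * pd i (pd k d) x
          + pd i d x * pd j (pd k d) x) := by
    intro i j k; rw [pd_pd_projk hU hd hx i j k, hx0]; ring
  -- expand the RHS Laplacian of the composition
  have hv0 := pd_pd_comp_kf hU hd hx hx0 0 0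
  have hv1 := pd_pd_comp_kf hU hd hx hx0 1 1
  simp only [Fin.sum_univ_two, hP, hPP] at hv0 hv1
  norm_num at hv0 hv1
  -- symmetry canonicalization
  have sh : pd 1 (pd 0 d) x = pd 0 (pd 1 d) x := sym2 hU hd hx 1 0
  have ss : pd 1 (pd 0 (kf d)) x = pd 0 (pd 1 (kf d)) x :=
    pd_comm hU hx (kf_contDiffOn hU hd)
  have st100 : pd 1 (pd 0 (pd 0 d)) x = pd 0 (pd 0 (pd 1 d)) x :=
    (sym3a hU hd hx 1 0 0).trans (sym3b hU hd hx 0 1 0)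
  have st010 : pd 0 (pd 1 (pd 0 d)) x = pd 0 (pd 0 (pd 1 d)) x := sym3b hU hd hx 0 1 0
  have st110 : pd 1 (pd 1 (pd 0 d)) x = pd 0 (pd 1 (pd 1 d)) x :=
    (sym3b hU hd hx 1 1 0).trans (sym3a hU hd hx 1 0 1)
  have st101 : pd 1 (pd 0 (pd 1 d)) x = pd 0 (pd 1 (pd 1 d)) x := sym3a hU hd hx 1 0 1
  simp only [sh, ss, st100, st010, st110, st101] at A0 A1 B00 B01 B11 Cp0 Cp1 kk0 kk1 hv0 hv1
  -- unfold laplacians in the goal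
  have hlap : ∀ f : (Fin 2 → ℝ) → ℝ, ∀ y, lap f y = pd 0 (pd 0 f) y + pd 1 (pd 1 f) y :=
    fun f y => by simp [lap, Fin.sum_univ_two]
  rw [hlap, hlap]
  rw [hv0, hv1]
  have hkfx : kf d x = pd 0 (pd 0 d) x + pd 1 (pd 1 d) x := rfl
  rw [hkfx]
  set a := pd 0 d x
  set b := pd 1 d x
  set h00 := pd 0 (pd 0 d) x
  set h01 := pd 0 (pd 1 d) x
  set h11 := pd 1 (pd 1 d) x
  set t000 := pd 0 (pd 0 (pd 0 d)) x
  set t001 := pd 0 (pd 0 (pd 1 d)) x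
  set t011 := pd 0 (pd 1 (pd 1 d)) x
  set t111 := pd 1 (pd 1 (pd 1 d)) x
  set k0 := pd 0 (kf d) x
  set k1 := pd 1 (kf d) x
  set s00 := pd 0 (pd 0 (kf d)) x
  set s01 := pd 0 (pd 1 (kf d)) x
  set s11 := pd 1 (pd 1 (kf d)) x
  have had : a * (h00*h11 - h01^2) = 0 := by linear_combination h11*A0 - h01*A1
  have hbd : b * (h00*h11 - h01^2) = 0 := by linear_combination h00*A1 - h01*A0
  have hdet : h00*h11 - h01^2 = 0 := by
    linear_combination a*had + b*hbd + (h01^2 - h00*h11)*heikx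
  have hQe : a^2*s00 + 2*a*b*s01 + b^2*s11 = 2*(h00+h11)^3 := by
    linear_combination a*Cp0 + b*Cp1 - k0*A0 - k1*A1 - 2*h00*B00 - 4*h01*B01 - 2*h11*B11
      - 6*(h00+h11)*hdet
  have hHK : a*k0 + b*k1 + (h00^2 + 2*h01^2 + h11^2) = 0 := by
    linear_combination a*kk0 + b*kk1 + B00 + B11
  linear_combination hQe + (h00+h11)*hHK - (a^2*s00+2*a*b*s01+b^2*s11)*heikx
    + 2*k0*A0 + 2*k1*A1 + 2*(h00+h11)*hdet
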